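/- There exists a LimSup-automaton A over alphabet {a,b} such that A simulates itself (reflexivity of simulation) but A does not product-based blindly dominate itself: for every partial resolver g on the second component of A×A there exist a partial resolver f on the first component and a word w with (A×₁A)^{f,g}(w) > (A×₂A)^{f,g}(w). Concretely A is: s0 --a--> s1, then s1 --a--> s2 or s1 --a--> s3 nondeterministically; s2 --a--> weight-1 sink, s2 --b--> weight-0 sink; s3 --b--> weight-1 sink, s3 --a--> weight-0 sink; all other transitions lead to a weight-0 sink. -/

import Mathlib

open Filter

/-- A quantitative automaton over alphabet `σ` with state type `Q`:
initial state, transition relation (required total), and transition weights. -/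
structure QAut (σ : Type) (Q : Type) where
  init : Q
  Δ : Q → σ → Q → Prop
  total : ∀ q a, ∃ q', Δ q a q'
  μ : Q → σ → Q → ℕ

namespace QAut

variable {σ Q : Type}

/-- The last state of a history (a finite sequence of (letter, state) steps from the
initial state). -/
def hlast (A : QAut σ Q) (h : List (σ × Q)) : Q :=
  (h.getLast?.map Prod.snd).getD A.init

/-- A resolver: maps each history and next letter to a successor state consistent with Δ. -/
structure Resolver (A : QAut σ Q) where
  f : List (σ × Q) → σ → Q
  consistent : ∀ h a, A.Δ (A.hlast h) a (f h a)

/-- The history produced by a resolver on the first `n` letters of a word. -/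
def Resolver.hist {A : QAut σ Q} (r : Resolver A) (w : ℕ → σ) : ℕ → List (σ × Q)
  | 0 => []
  | n + 1 => r.hist w n ++ [(w n, r.f (r.hist w n) (w n))]

/-- The unique run induced by a resolver on a word. -/
def Resolver.run {A : QAut σ Q} (r : Resolver A) (w : ℕ → σ) : ℕ → Q
  | 0 => A.init
  | n + 1 => r.f (r.hist w n) (w n)

/-- The weight sequence of the run induced by a resolver on a word. -/
def Resolver.wt {A : QAut σ Q} (r : Resolver A) (w : ℕ → σ) (n : ℕ) : ℕ :=
  A.μ (r.run w n) (w n) (r.run w (n + 1))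

/-- `A^f(w)`: the value (under value function `ν`) of the run induced by resolver `f` on `w`. -/
noncomputable def val (A : QAut σ Q) (ν : (ℕ → ℕ) → ℝ) (r : Resolver A) (w : ℕ → σ) : ℝ :=
  ν (r.wt w)

/-- `A_sup(w)`: the supremum over all resolvers of `A^f(w)`. -/
noncomputable def supVal (A : QAut σ Q) (ν : (ℕ → ℕ) → ℝ) (w : ℕ → σ) : ℝ :=
  ⨆ r : Resolver A, A.val ν r w

end QAut

/-- The `Inf` value function. -/
noncomputable def vInf (x : ℕ → ℕ) : ℝ := ⨅ n, (x n : ℝ)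

/-- The `Sup` value function. -/
noncomputable def vSup (x : ℕ → ℕ) : ℝ := ⨆ n, (x n : ℝ)

/-- The `LimSup` value function. -/
noncomputable def vLimSup (x : ℕ → ℕ) : ℝ := Filter.limsup (fun n => (x n : ℝ)) Filter.atTop

/-- The `LimInf` value function. -/
noncomputable def vLimInf (x : ℕ → ℕ) : ℝ := Filter.liminf (fun n => (x n : ℝ)) Filter.atTop

/-- `ν ∈ {Inf, Sup, LimSup, LimInf}`. -/
def IsClassic (ν : (ℕ → ℕ) → ℝ) : Prop :=
  ν = vInf ∨ ν = vSup ∨ ν = vLimSup ∨ ν = vLimInf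

namespace QAut

variable {σ QA QB : Type}

/-- Last product state of a product history. -/
def plast (A : QAut σ QA) (B : QAut σ QB) (h : List (σ × (QA × QB))) : QA × QB :=
  (h.getLast?.map Prod.snd).getD (A.init, B.init)

/-- A partial resolver operating (non-partially) on the first component of the
synchronized product of `A` and `B`: given the full product history and a letter, it
chooses a transition of `A`. -/
structure PRes1 (A : QAut σ QA) (B : QAut σ QB) where
  f : List (σ × (QA × QB)) → σ → QA
  consistent : ∀ h a, A.Δ (plast A B h).1 a (f h a)

/-- A partial resolver operating on the second component of the synchronized product. -/
structure PRes2 (A : QAut σ QA) (B : QAut σ QB) where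
  g : List (σ × (QA × QB)) → σ → QB
  consistent : ∀ h a, B.Δ (plast A B h).2 a (g h a)

variable {A : QAut σ QA} {B : QAut σ QB}

/-- The product history induced by a conclusive pair of partial resolvers on a word. -/
def prodHist (f : PRes1 A B) (g : PRes2 A B) (w : ℕ → σ) : ℕ → List (σ × (QA × QB))
  | 0 => []
  | n + 1 =>
    prodHist f g w n ++
      [(w n, (f.f (prodHist f g w n) (w n), g.g (prodHist f g w n) (w n)))]

/-- The unique run of the synchronized product induced by the conclusive pair `(f, g)`. -/
def prodRun (f : PRes1 A B) (g : PRes2 A B) (w : ℕ → σ) (n : ℕ) : QA × QB :=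
  plast A B (prodHist f g w n)

/-- `(A×₁B)^{f,g}(w)`: the value of the product run, with weights taken from `A`. -/
noncomputable def pval1 (ν : (ℕ → ℕ) → ℝ) (f : PRes1 A B) (g : PRes2 A B)
    (w : ℕ → σ) : ℝ :=
  ν (fun n => A.μ (prodRun f g w n).1 (w n) (prodRun f g w (n + 1)).1)

/-- `(A×₂B)^{f,g}(w)`: the value of the product run, with weights taken from `B`. -/
noncomputable def pval2 (ν : (ℕ → ℕ) → ℝ) (f : PRes1 A B) (g : PRes2 A B)
    (w : ℕ → σ) : ℝ :=
  ν (fun n => B.μ (prodRun f g w n).2 (w n) (prodRun f g w (n + 1)).2)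

end QAut

namespace QAut

variable {σ QA QB : Type}

/-- A Challenger strategy in the quantitative simulation game between `A` and `B`:
it maps a finite sequence of state pairs to a letter and an `A`-transition. -/
structure ChalStrat (A : QAut σ QA) (B : QAut σ QB) where
  τ : List (QA × QB) → σ × QA
  consistent : ∀ h : List (QA × QB),
    A.Δ (h.getLast?.getD (A.init, B.init)).1 (τ h).1 (τ h).2

/-- An outcome of a Challenger strategy: a word and a pair of runs where Challenger's
moves follow `τ` and Simulator responds with `B`-transitions. -/
structure SimOutcome {A : QAut σ QA} {B : QAut σ QB} (c : ChalStrat A B) where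
  w : ℕ → σ
  r1 : ℕ → QA
  r2 : ℕ → QB
  init1 : r1 0 = A.init
  init2 : r2 0 = B.init
  chal : ∀ n, c.τ ((List.range (n + 1)).map (fun i => (r1 i, r2 i))) = (w n, r1 (n + 1))
  sim : ∀ n, B.Δ (r2 n) (w n) (r2 (n + 1))

/-- Challenger's strategy is winning iff every outcome `(r1, r2)` satisfies
`ν₁(μ_A(r1)) > ν₂(μ_B(r2))`. -/
def ChalWins {A : QAut σ QA} {B : QAut σ QB} (ν₁ ν₂ : (ℕ → ℕ) → ℝ)
    (c : ChalStrat A B) : Prop :=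
  ∀ o : SimOutcome c,
    ν₂ (fun n => B.μ (o.r2 n) (o.w n) (o.r2 (n + 1))) <
      ν₁ (fun n => A.μ (o.r1 n) (o.w n) (o.r1 (n + 1)))

/-- `B` simulates `A` iff Challenger has no winning strategy in the simulation game. -/
def Simulates (ν₁ ν₂ : (ℕ → ℕ) → ℝ) (A : QAut σ QA) (B : QAut σ QB) : Prop :=
  ¬ ∃ c : ChalStrat A B, ChalWins ν₁ ν₂ c

end QAut

/-- States of the automaton `A` of the separating example:
`s0 --a--> s1`, then `s1 --a--> s2` or `s3`; `s2 --a-->` weight-1 sink `top`,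
`s2 --b-->` weight-0 sink `bot`; `s3 --b--> top`, `s3 --a--> bot`;
all other transitions go to `bot`. -/
inductive SA where
  | s0 | s1 | s2 | s3 | top | bot
  deriving DecidableEq

instance instFintypeSA : Fintype SA where
  elems := {SA.s0, SA.s1, SA.s2, SA.s3, SA.top, SA.bot}
  complete := by intro x; cases x <;> simp

/-- Successor lists of `A` (letters: `a = true`, `b = false`). -/
def Anext : SA → Bool → List SA
  | .s0, true => [.s1]
  | .s0, false => [.bot]
  | .s1, true => [.s2, .s3]
  | .s1, false => [.bot]
  | .s2, true => [.top]
  | .s2, false => [.bot]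
  | .s3, true => [.bot]
  | .s3, false => [.top]
  | .top, _ => [.top]
  | .bot, _ => [.bot]

/-- The concrete LimSup-automaton `A` of the separating example. -/
def AutA : QAut Bool SA where
  init := .s0
  Δ := fun q a q' => q' ∈ Anext q a
  total := by decide
  μ := fun q _ q' => if q = SA.top ∧ q' = SA.top then 1 else 0

/-! ### Auxiliary development for the proof -/

section Part1

variable {σ Q : Type}

/-- The list of state pairs where the Simulator copies every move of Challenger `c`. -/
def copyL (A : QAut σ Q) (c : QAut.ChalStrat A A) : ℕ → List (Q × Q)
  | 0 => [(A.init, A.init)]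
  | n + 1 => copyL A c n ++ [((c.τ (copyL A c n)).2, (c.τ (copyL A c n)).2)]

/-- The copied run. -/
def copyR (A : QAut σ Q) (c : QAut.ChalStrat A A) : ℕ → Q
  | 0 => A.init
  | n + 1 => (c.τ (copyL A c n)).2

/-- The word produced by Challenger `c` against the copying strategy. -/
def copyW (A : QAut σ Q) (c : QAut.ChalStrat A A) (n : ℕ) : σ :=
  (c.τ (copyL A c n)).1

lemma copyL_eq (A : QAut σ Q) (c : QAut.ChalStrat A A) (n : ℕ) :
    copyL A c n = (List.range (n + 1)).map (fun i => (copyR A c i, copyR A c i)) := by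
  induction n with
  | zero => rfl
  | succ n ih => rw [List.range_succ, List.map_append, ← ih, copyL]; rfl

lemma copyL_getLast (A : QAut σ Q) (c : QAut.ChalStrat A A) (n : ℕ) :
    (copyL A c n).getLast?.getD (A.init, A.init) = (copyR A c n, copyR A c n) := by
  cases n with
  | zero => simp [copyL, copyR]
  | succ n => rw [copyL, List.getLast?_concat]; rfl

/-- The copying outcome against Challenger `c`. -/
def copyOutcome (A : QAut σ Q) (c : QAut.ChalStrat A A) : QAut.SimOutcome c where
  w := copyW A c
  r1 := copyR A c
  r2 := copyR A c
  init1 := rfl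
  init2 := rfl
  chal := fun n => by rw [← copyL_eq]; rfl
  sim := fun n => by
    have h := c.consistent (copyL A c n)
    rw [copyL_getLast] at h
    exact h

/-- Any automaton simulates itself (for equal value functions). -/
lemma simulates_self (A : QAut σ Q) (ν : (ℕ → ℕ) → ℝ) : QAut.Simulates ν ν A A := by
  rintro ⟨c, hc⟩
  exact absurd (hc (copyOutcome A c)) (lt_irrefl _)

end Part1

section Part2

/-- Canonical successor choice. -/
def pick : SA → Bool → SA
  | .s0, true => .s1
  | .s0, false => .bot
  | .s1, true => .s2
  | .s1, false => .bot
  | .s2, true => .top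
  | .s2, false => .bot
  | .s3, true => .bot
  | .s3, false => .top
  | .top, _ => .top
  | .bot, _ => .bot

lemma pick_mem : ∀ q a, pick q a ∈ Anext q a := by decide

/-- The state opposite to `qg` among `{s2, s3}`. -/
def oth (qg : SA) : SA := if qg = SA.s2 then SA.s3 else SA.s2

/-- The resolver for the first component: at `s1` on `a`, go opposite to `qg`. -/
def ff (qg : SA) (h : List (Bool × (SA × SA))) (a : Bool) : SA :=
  if (QAut.plast AutA AutA h).1 = SA.s1 ∧ a = true then oth qg
  else pick (QAut.plast AutA AutA h).1 a

lemma ff_consistent (qg : SA) :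
    ∀ h a, AutA.Δ (QAut.plast AutA AutA h).1 a (ff qg h a) := by
  intro h a
  show ff qg h a ∈ Anext (QAut.plast AutA AutA h).1 a
  unfold ff
  split
  · next hc =>
    rw [hc.1, hc.2]
    unfold oth
    split <;> simp [Anext]
  · exact pick_mem _ _

/-- The partial resolver on the first component punishing choice `qg`. -/
def fres (qg : SA) : QAut.PRes1 AutA AutA := ⟨ff qg, ff_consistent qg⟩

/-- The word: `a, a, (a or b depending on qg), a, a, ...`. -/
def ww (qg : SA) (n : ℕ) : Bool := if n = 2 then decide (qg = SA.s3) else true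

/-- A deterministic transition forces `g`'s choice. -/
lemma g_forced (g : QAut.PRes2 AutA AutA) (h : List (Bool × (SA × SA))) (a : Bool)
    {q' : SA} (hq : Anext (QAut.plast AutA AutA h).2 a = [q']) : g.g h a = q' := by
  have hc : g.g h a ∈ Anext (QAut.plast AutA AutA h).2 a := g.consistent h a
  rw [hq] at hc
  simpa using hc

lemma plast_concat (h : List (Bool × (SA × SA))) (x : Bool × (SA × SA)) :
    QAut.plast AutA AutA (h ++ [x]) = x.2 := by
  simp [QAut.plast, List.getLast?_concat]

/-- `g`'s (blind) choice at `s1` after reading `aa`. -/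
def qgOf (g : QAut.PRes2 AutA AutA) : SA := g.g [(true, (SA.s1, SA.s1))] true

lemma part2 (g : QAut.PRes2 AutA AutA) :
    QAut.pval2 vLimSup (fres (qgOf g)) g (ww (qgOf g)) <
      QAut.pval1 vLimSup (fres (qgOf g)) g (ww (qgOf g)) := by
  set f : QAut.PRes1 AutA AutA := fres (qgOf g) with hf
  set w : ℕ → Bool := ww (qgOf g) with hw
  -- `g` must choose `s2` or `s3`
  have hqg : qgOf g = SA.s2 ∨ qgOf g = SA.s3 := by
    have h : qgOf g ∈ Anext SA.s1 true := g.consistent [(true, (SA.s1, SA.s1))] true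
    simpa [Anext] using h
  -- compute the product histories
  have hist1 : QAut.prodHist f g w 1 = [(true, (SA.s1, SA.s1))] := by
    have hg : g.g [] true = SA.s1 := g_forced g [] true rfl
    show [] ++ [(w 0, (f.f [] (w 0), g.g [] (w 0)))] = _
    rw [show w 0 = true from rfl, hg]
    rfl
  have hist2 : QAut.prodHist f g w 2 =
      [(true, (SA.s1, SA.s1)), (true, (oth (qgOf g), qgOf g))] := by
    show QAut.prodHist f g w 1 ++ [(w 1, (f.f (QAut.prodHist f g w 1) (w 1),
        g.g (QAut.prodHist f g w 1) (w 1)))] = _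
    rw [hist1]
    rfl
  have plast2 : QAut.plast AutA AutA (QAut.prodHist f g w 2) = (oth (qgOf g), qgOf g) := by
    rw [hist2]; rfl
  -- the step lemma: from `(top, bot)` the product stays at `(top, bot)`
  have step : ∀ h : List (Bool × (SA × SA)), QAut.plast AutA AutA h = (SA.top, SA.bot) →
      ∀ a, (ff (qgOf g) h a, g.g h a) = (SA.top, SA.bot) := by
    intro h hh a
    have hg : g.g h a = SA.bot := g_forced g h a (by rw [hh]; cases a <;> rfl)
    have hff : ff (qgOf g) h a = SA.top := by
      unfold ff; rw [hh]; cases a <;> rfl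
    rw [hff, hg]
  -- the run reaches `(top, bot)` at time 3 and stays there
  have key : ∀ n, QAut.plast AutA AutA (QAut.prodHist f g w (n + 3)) = (SA.top, SA.bot) := by
    intro n
    induction n with
    | zero =>
      have e3 : QAut.prodHist f g w 3 = QAut.prodHist f g w 2 ++
          [(w 2, (f.f (QAut.prodHist f g w 2) (w 2), g.g (QAut.prodHist f g w 2) (w 2)))] := rfl
      rw [e3, plast_concat]
      have hgb : g.g (QAut.prodHist f g w 2) (w 2) = SA.bot := by
        refine g_forced g _ _ ?_
        rw [plast2]
        rcases hqg with h | h <;> rw [hw, h] <;> rfl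
      have hft : f.f (QAut.prodHist f g w 2) (w 2) = SA.top := by
        show ff (qgOf g) _ _ = _
        unfold ff
        rw [plast2]
        rcases hqg with h | h <;> rw [hw, h] <;> rfl
      rw [hgb, hft]
    | succ n ih =>
      have e : QAut.prodHist f g w (n + 4) = QAut.prodHist f g w (n + 3) ++
          [(w (n + 3), (f.f (QAut.prodHist f g w (n + 3)) (w (n + 3)),
            g.g (QAut.prodHist f g w (n + 3)) (w (n + 3))))] := rfl
      rw [show n + 1 + 3 = n + 4 from rfl, e, plast_concat]
      exact step _ ih _
  -- run values
  have run0 : QAut.prodRun f g w 0 = (SA.s0, SA.s0) := rfl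
  have run1 : QAut.prodRun f g w 1 = (SA.s1, SA.s1) := by
    show QAut.plast AutA AutA (QAut.prodHist f g w 1) = _
    rw [hist1]; rfl
  have run2 : QAut.prodRun f g w 2 = (oth (qgOf g), qgOf g) := plast2
  have run3 : ∀ n, QAut.prodRun f g w (n + 3) = (SA.top, SA.bot) := key
  -- the first-component weight sequence is eventually 1
  have hseq1 : ∀ n, 3 ≤ n →
      AutA.μ (QAut.prodRun f g w n).1 (w n) (QAut.prodRun f g w (n + 1)).1 = 1 := by
    intro n hn
    obtain ⟨m, rfl⟩ : ∃ m, n = m + 3 := ⟨n - 3, by omega⟩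
    rw [run3 m, show m + 3 + 1 = (m + 1) + 3 from by ring, run3 (m + 1)]
    rfl
  -- the second-component weight sequence is identically 0
  have hseq2 : ∀ n,
      AutA.μ (QAut.prodRun f g w n).2 (w n) (QAut.prodRun f g w (n + 1)).2 = 0 := by
    intro n
    match n with
    | 0 => rw [run0, run1]; rfl
    | 1 => rw [run1, run2]; rcases hqg with h | h <;> rw [h] <;> rfl
    | 2 => rw [run2, show (2 : ℕ) + 1 = 0 + 3 from rfl, run3 0]; simp [AutA]
    | (m + 3) =>
      rw [run3 m, show m + 3 + 1 = (m + 1) + 3 from by ring, run3 (m + 1)]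
      simp [AutA]
  -- conclude
  have hp1 : QAut.pval1 vLimSup f g w = 1 := by
    unfold QAut.pval1 vLimSup
    have hev : ∀ᶠ n in atTop,
        ((AutA.μ (QAut.prodRun f g w n).1 (w n) (QAut.prodRun f g w (n + 1)).1 : ℕ) : ℝ)
          = (fun _ : ℕ => (1 : ℝ)) n := by
      filter_upwards [Filter.eventually_ge_atTop 3] with n hn
      rw [hseq1 n hn]; norm_num
    rw [Filter.limsup_congr hev, Filter.limsup_const]
  have hp2 : QAut.pval2 vLimSup f g w = 0 := by
    unfold QAut.pval2 vLimSup
    have hev : (fun n =>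
        ((AutA.μ (QAut.prodRun f g w n).2 (w n) (QAut.prodRun f g w (n + 1)).2 : ℕ) : ℝ))
          = fun _ : ℕ => (0 : ℝ) := by
      funext n; rw [hseq2 n]; norm_num
    rw [hev, Filter.limsup_const]
  rw [hp1, hp2]
  norm_num

end Part2

/-- The concrete LimSup-automaton `A` simulates itself, but does not
product-based blindly dominate itself: for every partial resolver `g` on the second
component of `A×A` there are a partial resolver `f` on the first component and a word
`w` with `(A×₁A)^{f,g}(w) > (A×₂A)^{f,g}(w)`. -/
theorem simulation_not_product_blind_dominance :
    QAut.Simulates vLimSup vLimSup AutA AutA ∧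
      (∀ g : QAut.PRes2 AutA AutA, ∃ f : QAut.PRes1 AutA AutA, ∃ w : ℕ → Bool,
        QAut.pval2 vLimSup f g w < QAut.pval1 vLimSup f g w) :=
  ⟨simulates_self AutA vLimSup, fun g => ⟨fres (qgOf g), ww (qgOf g), part2 g⟩⟩
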